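/- (Density-crossing characterization of the variance-maximizing window.) Let f₁, f₂ : ℝ → ℝ be measurable, nonnegative, integrable functions with ∫ℝ f₁ = ∫ℝ f₂ = 1, let c ∈ ℝ be a common peak location, and let h* > 0. Suppose f₁(x) > f₂(x) for almost every x with |x − c| < h*/2 and f₁(x) ≤ f₂(x) for almost every x with |x − c| > h*/2 (the two density curves intersect at the boundary of the h*-window). For h ≥ 0 define ψᵢ(h) = ∫ from c − h/2 to c + h/2 of fᵢ. Then for any weights w₁, w₂ ∈ (0, 1) with w₁ + w₂ = 1, the two-group variance V(h) = Var_w(ψ₁(h), ψ₂(h)) satisfies V(h) ≤ V(h*) for all h ≥ 0; that is, the variance of peak trip concentration across users is maximized at the window width h* at which the two density curves intersect, regardless of the group proportions. -/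
import Mathlib


open MeasureTheory

/-- Two-point weighted variance: `Var_w(x₁,x₂) = w₁(x₁-m)² + w₂(x₂-m)²` with
`m = w₁x₁ + w₂x₂`. -/
def varW (w₁ w₂ x₁ x₂ : ℝ) : ℝ :=
  w₁ * (x₁ - (w₁ * x₁ + w₂ * x₂)) ^ 2 + w₂ * (x₂ - (w₁ * x₁ + w₂ * x₂)) ^ 2

lemma varW_eq (w₁ w₂ x₁ x₂ : ℝ) (hsum : w₁ + w₂ = 1) :
    varW w₁ w₂ x₁ x₂ = w₁ * w₂ * (x₁ - x₂) ^ 2 := by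
  have h : w₂ = 1 - w₁ := by linarith
  subst h
  unfold varW
  ring

/-- density-crossing characterization of the variance-maximizing window:
if two probability densities `f₁, f₂` (with a common peak location `c`) satisfy
`f₁ > f₂` a.e. inside the `h*`-window around `c` and `f₁ ≤ f₂` a.e. outside it, then
the two-group variance of the centered peak trip concentrations
`ψᵢ(h) = ∫_{c-h/2}^{c+h/2} fᵢ` is maximized at `h*`, regardless of the group
proportions. -/
theorem variance_maximised_at_density_crossing
    (f₁ f₂ : ℝ → ℝ) (hm₁ : Measurable f₁) (hm₂ : Measurable f₂)
    (hnn₁ : ∀ x, 0 ≤ f₁ x) (hnn₂ : ∀ x, 0 ≤ f₂ x)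
    (hint₁ : Integrable f₁) (hint₂ : Integrable f₂)
    (hI₁ : ∫ x, f₁ x = 1) (hI₂ : ∫ x, f₂ x = 1)
    (c hstar : ℝ) (hstar_pos : 0 < hstar)
    (hin : ∀ᵐ x : ℝ, |x - c| < hstar / 2 → f₁ x > f₂ x)
    (hout : ∀ᵐ x : ℝ, |x - c| > hstar / 2 → f₁ x ≤ f₂ x)
    (w₁ w₂ : ℝ) (hw₁ : w₁ ∈ Set.Ioo (0 : ℝ) 1) (hw₂ : w₂ ∈ Set.Ioo (0 : ℝ) 1)
    (hsum : w₁ + w₂ = 1) :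
    ∀ h : ℝ, 0 ≤ h →
      varW w₁ w₂ (∫ x in (c - h / 2)..(c + h / 2), f₁ x)
          (∫ x in (c - h / 2)..(c + h / 2), f₂ x) ≤
        varW w₁ w₂ (∫ x in (c - hstar / 2)..(c + hstar / 2), f₁ x)
          (∫ x in (c - hstar / 2)..(c + hstar / 2), f₂ x) := by
  intro h hh
  set g : ℝ → ℝ := fun x => f₁ x - f₂ x with hg
  have hg_int : Integrable g := hint₁.sub hint₂
  have hg_total : ∫ x, g x = 0 := by
    rw [integral_sub hint₁ hint₂, hI₁, hI₂]; ring
  set B : Set ℝ := Set.Ioc (c - hstar / 2) (c + hstar / 2) with hB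
  have hBm : MeasurableSet B := measurableSet_Ioc
  have hne : ∀ a : ℝ, ∀ᵐ x : ℝ, x ≠ a := fun a =>
    ae_iff.2 (by simp)
  -- a.e. nonnegativity of g on B
  have hgB : ∀ᵐ x : ℝ, x ∈ B → 0 ≤ g x := by
    filter_upwards [hin, hne (c + hstar / 2)] with x hx hx' hxB
    have h1 : c - hstar / 2 < x := hxB.1
    have h2' : x < c + hstar / 2 := lt_of_le_of_ne hxB.2 hx'
    have habs : |x - c| < hstar / 2 := abs_sub_lt_iff.mpr ⟨by linarith, by linarith⟩
    have := hx habs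
    simp only [hg]; linarith
  -- a.e. nonpositivity of g off B
  have hgO : ∀ᵐ x : ℝ, x ∉ B → g x ≤ 0 := by
    filter_upwards [hout, hne (c - hstar / 2)] with x hx hx' hxO
    have hxO' : ¬(c - hstar / 2 < x ∧ x ≤ c + hstar / 2) := hxO
    have habs : |x - c| > hstar / 2 := by
      rcases not_and_or.mp hxO' with h' | h'
      · push_neg at h'
        have h'' : x < c - hstar / 2 := lt_of_le_of_ne h' hx'
        calc hstar / 2 < c - x := by linarith
          _ ≤ |x - c| := by rw [abs_sub_comm]; exact le_abs_self _
      · push_neg at h'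
        calc hstar / 2 < x - c := by linarith
          _ ≤ |x - c| := le_abs_self _
    have := hx habs
    simp only [hg]; linarith
  -- upper bound: for any measurable set S, ∫_S g ≤ ∫_B g
  have key : ∀ S : Set ℝ, MeasurableSet S → (∫ x in S, g x) ≤ ∫ x in B, g x := by
    intro S hSm
    have hsplit : ∫ x in S, g x = (∫ x in S ∩ B, g x) + ∫ x in S \ B, g x := by
      rw [← setIntegral_union (disjoint_sdiff_self_right.mono_left Set.inter_subset_right) (hSm.diff hBm)
        hg_int.integrableOn hg_int.integrableOn, Set.inter_union_diff]
    have h1 : ∫ x in S ∩ B, g x ≤ ∫ x in B, g x := by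
      apply setIntegral_mono_set hg_int.integrableOn
      · exact (ae_restrict_iff' hBm).2 hgB
      · exact HasSubset.Subset.eventuallyLE Set.inter_subset_right
    have h2 : ∫ x in S \ B, g x ≤ 0 := by
      apply setIntegral_nonpos_ae (hSm.diff hBm)
      filter_upwards [hgO] with x hx hxS
      exact hx hxS.2
    linarith [hsplit, h1, h2]
  -- the h-window
  set S : Set ℝ := Set.Ioc (c - h / 2) (c + h / 2) with hS
  have hSm : MeasurableSet S := measurableSet_Ioc
  -- lower bound: 0 ≤ ∫_S g
  have lower : 0 ≤ ∫ x in S, g x := by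
    rcases le_or_gt h hstar with hc | hc
    · apply setIntegral_nonneg_ae hSm
      filter_upwards [hgB] with x hx hxS
      exact hx ⟨by have := hxS.1; linarith, by have := hxS.2; linarith⟩
    · have hcompl : ∫ x in Sᶜ, g x ≤ 0 := by
        apply setIntegral_nonpos_ae hSm.compl
        filter_upwards [hout] with x hx hxS
        have hxS' : ¬(c - h / 2 < x ∧ x ≤ c + h / 2) := by
          simpa [hS, Set.mem_Ioc] using hxS
        have habs : |x - c| > hstar / 2 := by
          rcases not_and_or.mp hxS' with h' | h'
          · push_neg at h'
            calc hstar / 2 < c - x := by linarith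
              _ ≤ |x - c| := by rw [abs_sub_comm]; exact le_abs_self _
          · push_neg at h'
            calc hstar / 2 < x - c := by linarith
              _ ≤ |x - c| := le_abs_self _
        simp only [hg]; linarith [hx habs]
      have := integral_add_compl hSm hg_int
      rw [hg_total] at this
      linarith
  have upper : (∫ x in S, g x) ≤ ∫ x in B, g x := key S hSm
  have lowerB : 0 ≤ ∫ x in B, g x := le_trans lower upper
  -- convert interval integrals to set integrals
  have hab : c - h / 2 ≤ c + h / 2 := by linarith
  have hab' : c - hstar / 2 ≤ c + hstar / 2 := by linarith
  have e₁ : ∫ x in (c - h / 2)..(c + h / 2), f₁ x = ∫ x in S, f₁ x :=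
    intervalIntegral.integral_of_le hab
  have e₂ : ∫ x in (c - h / 2)..(c + h / 2), f₂ x = ∫ x in S, f₂ x :=
    intervalIntegral.integral_of_le hab
  have e₃ : ∫ x in (c - hstar / 2)..(c + hstar / 2), f₁ x = ∫ x in B, f₁ x :=
    intervalIntegral.integral_of_le hab'
  have e₄ : ∫ x in (c - hstar / 2)..(c + hstar / 2), f₂ x = ∫ x in B, f₂ x :=
    intervalIntegral.integral_of_le hab'
  have dS : (∫ x in S, f₁ x) - ∫ x in S, f₂ x = ∫ x in S, g x := by
    rw [← integral_sub hint₁.integrableOn hint₂.integrableOn]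
  have dB : (∫ x in B, f₁ x) - ∫ x in B, f₂ x = ∫ x in B, g x := by
    rw [← integral_sub hint₁.integrableOn hint₂.integrableOn]
  rw [e₁, e₂, e₃, e₄, varW_eq _ _ _ _ hsum, varW_eq _ _ _ _ hsum]
  have hw₁₂ : 0 < w₁ * w₂ := mul_pos hw₁.1 hw₂.1
  apply mul_le_mul_of_nonneg_left _ hw₁₂.le
  rw [show (∫ x in S, f₁ x) - ∫ x in S, f₂ x = ∫ x in S, g x from dS,
    show (∫ x in B, f₁ x) - ∫ x in B, f₂ x = ∫ x in B, g x from dB]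
  exact pow_le_pow_left₀ lower upper 2
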